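/- arXiv:2212.04182 — 2 statements merged into one kernel-verified Lean document; each statement's English description precedes it below -/
import Mathlib

section
/- The rings ℤ/2[X,Y]/(X³, Y², X² + XY) and ℤ/2[X,Y]/(X³, Y², XY) are not isomorphic. -/
open MvPolynomial QuadraticAlgebra

/-!
A ring isomorphism preserves the socle, the set of elements killing every non-unit. In both rings
`x` and `y` are nilpotent, so the non-units form the ideal `(x, y)` and the socle is the common
annihilator of `x` and `y`. In `ℤ/2[X,Y]/(X³, Y², XY)` it contains the two distinct nonzero elements
`y` and `x²`. In `ℤ/2[X,Y]/(X³, Y², X² + XY)` it is `{0, x²}`, which is read off in a faithful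
16-element model.
-/

/-- For a local ring this is the socle, the annihilator of the maximal ideal. -/
def socle (R : Type*) [CommRing R] : Set R := {z | ∀ w ∈ nonunits R, z * w = 0}

section Socle

variable {R S : Type*} [CommRing R] [CommRing S]

theorem RingEquiv.map_mem_socle (e : R ≃+* S) {z : R} (hz : z ∈ socle R) : e z ∈ socle S := by
  intro w hw
  have hw' : e.symm w ∈ nonunits R := fun hu => hw (by simpa using hu.map e)
  simpa using congrArg e (hz _ hw')

theorem RingEquiv.subsingleton_socle_diff_zero (e : R ≃+* S)
    (h : (socle S \ {0}).Subsingleton) : (socle R \ {0}).Subsingleton :=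
  (h.preimage e.injective).anti fun _ ⟨hz, hz0⟩ => ⟨e.map_mem_socle hz, by simpa using hz0⟩

end Socle

section NilpotentVariables

variable {σ k : Type*} [Field k] {I : Ideal (MvPolynomial σ k)}

theorem mem_span_X_of_not_isUnit (hX : ∀ i, IsNilpotent (Ideal.Quotient.mk I (X i)))
    {w : MvPolynomial σ k ⧸ I} (hw : ¬IsUnit w) :
    w ∈ Ideal.span (Set.range fun i => Ideal.Quotient.mk I (X i)) := by
  obtain ⟨p, rfl⟩ := Ideal.Quotient.mk_surjective w
  have hp : p - C (constantCoeff p) ∈ idealOfVars σ k := by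
    rw [← pow_one (idealOfVars σ k), mem_pow_idealOfVars_iff']
    intro m hm
    obtain rfl : m = 0 := by simpa [Nat.lt_one_iff, Finsupp.degree_eq_zero_iff] using hm
    simp [constantCoeff_eq]
  have hmem : Ideal.Quotient.mk I (p - C (constantCoeff p)) ∈
      Ideal.span (Set.range fun i => Ideal.Quotient.mk I (X i)) := by
    have := Ideal.mem_map_of_mem (Ideal.Quotient.mk I) hp
    rwa [idealOfVars, Ideal.map_span, ← Set.range_comp] at this
  have hnil : IsNilpotent (Ideal.Quotient.mk I (p - C (constantCoeff p))) :=
    Ideal.span_le (I := nilradical _) |>.mpr (by rintro _ ⟨i, rfl⟩; exact hX i) hmem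
  obtain hc | hc := eq_or_ne (constantCoeff p) 0
  · simpa [hc] using hmem
  · refine absurd ?_ hw
    simpa using hnil.isUnit_add_left_of_commute
      ((IsUnit.mk0 _ hc).map ((Ideal.Quotient.mk I).comp C)) (Commute.all _ _)

theorem mem_socle_of_forall_mul_X_eq_zero (hX : ∀ i, IsNilpotent (Ideal.Quotient.mk I (X i)))
    {z : MvPolynomial σ k ⧸ I} (hz : ∀ i, z * Ideal.Quotient.mk I (X i) = 0) :
    z ∈ socle (MvPolynomial σ k ⧸ I) := fun w hw =>
  Ideal.span_le (I := LinearMap.ker (LinearMap.mulLeft _ z)) |>.mpr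
    (by rintro _ ⟨i, rfl⟩; exact hz i) (mem_span_X_of_not_isUnit hX hw)

end NilpotentVariables

noncomputable def MvPolynomial.aevalQuotientSpan {σ R A : Type*} [CommRing R] [CommRing A]
    [Algebra R A] {s : Set (MvPolynomial σ R)} (v : σ → A) (hv : ∀ p ∈ s, aeval v p = 0) :
    MvPolynomial σ R ⧸ Ideal.span s →ₐ[R] A :=
  Ideal.Quotient.liftₐ _ (aeval v) fun _ hp =>
    RingHom.mem_ker.mp (Ideal.span_le.mpr (fun p hp => RingHom.mem_ker.mpr (hv p hp)) hp)

@[simp]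
theorem MvPolynomial.aevalQuotientSpan_mk_X {σ R A : Type*} [CommRing R] [CommRing A]
    [Algebra R A] {s : Set (MvPolynomial σ R)} (v : σ → A) (hv : ∀ p ∈ s, aeval v p = 0)
    (i : σ) : aevalQuotientSpan v hv (Ideal.Quotient.mk _ (X i)) = v i :=
  aeval_X v i

instance {R : Type*} [Fintype R] {a b : R} : Fintype (QuadraticAlgebra R a b) :=
  Fintype.ofEquiv _ (QuadraticAlgebra.equivProd a b).symm

abbrev DualNumbersZMod2 := QuadraticAlgebra (ZMod 2) 0 0

/-- `𝔽₂[ε, ω] / (ε², ω² - εω)`, a faithful model of `KleinBottleRing` via `x ↦ ω`, `y ↦ ε`. -/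
abbrev KleinModel := QuadraticAlgebra DualNumbersZMod2 0 ω

theorem KleinModel.eq_omega_sq_of_mul_eq_zero (m : KleinModel) (hω : m * ω = 0)
    (hε : m * algebraMap DualNumbersZMod2 KleinModel ω = 0) (hm : m ≠ 0) : m = ω ^ 2 := by
  revert m; decide

-- The `ℤ/2`-cohomology rings of the Klein bottle and of `ℝP² ∨ S¹`.
noncomputable abbrev KleinBottleRing : Type :=
  MvPolynomial (Fin 2) (ZMod 2) ⧸
    Ideal.span {(X 0 : MvPolynomial (Fin 2) (ZMod 2)) ^ 3, X 1 ^ 2, X 0 ^ 2 + X 0 * X 1}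

noncomputable abbrev WedgeRing : Type :=
  MvPolynomial (Fin 2) (ZMod 2) ⧸
    Ideal.span {(X 0 : MvPolynomial (Fin 2) (ZMod 2)) ^ 3, X 1 ^ 2, X 0 * X 1}

namespace KleinBottleRing

noncomputable def x : KleinBottleRing := Ideal.Quotient.mk _ (X 0)
noncomputable def y : KleinBottleRing := Ideal.Quotient.mk _ (X 1)

theorem x_pow_three : x ^ 3 = 0 := by
  rw [x, ← map_pow, Ideal.Quotient.eq_zero_iff_mem]; exact Ideal.subset_span (by simp)

theorem y_sq : y ^ 2 = 0 := by
  rw [y, ← map_pow, Ideal.Quotient.eq_zero_iff_mem]; exact Ideal.subset_span (by simp)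

theorem x_sq_add_x_mul_y : x ^ 2 + x * y = 0 := by
  rw [x, y, ← map_pow, ← map_mul, ← map_add, Ideal.Quotient.eq_zero_iff_mem]
  exact Ideal.subset_span (by simp)

theorem exists_eq_linear_combination (z : KleinBottleRing) : ∃ a b c d : ZMod 2,
    z = algebraMap _ _ a + algebraMap _ _ b * x + algebraMap _ _ c * y +
      algebraMap _ _ d * x ^ 2 := by
  obtain ⟨p, rfl⟩ := Ideal.Quotient.mk_surjective z
  induction p using MvPolynomial.induction_on with
  | C r => exact ⟨r, 0, 0, 0, by simp only [map_zero, zero_mul, add_zero]; rfl⟩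
  | add p q hp hq =>
    obtain ⟨a, b, c, d, hp⟩ := hp
    obtain ⟨a', b', c', d', hq⟩ := hq
    exact ⟨a + a', b + b', c + c', d + d', by rw [map_add, hp, hq]; simp only [map_add]; ring⟩
  | mul_X p i hp =>
    obtain ⟨a, b, c, d, hp⟩ := hp
    rw [map_mul, hp]
    fin_cases i
    · refine ⟨0, a, 0, b - c, ?_⟩
      show _ * x = _
      simp only [map_zero, map_sub]
      linear_combination algebraMap _ _ c * x_sq_add_x_mul_y + algebraMap _ _ d * x_pow_three
    · refine ⟨0, 0, a, -b, ?_⟩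
      show _ * y = _
      simp only [map_zero, map_neg]
      linear_combination (algebraMap _ _ b + algebraMap _ _ d * x) * x_sq_add_x_mul_y +
        algebraMap _ _ c * y_sq - algebraMap _ _ d * x_pow_three

noncomputable def toModel : KleinBottleRing →ₐ[ZMod 2] KleinModel :=
  aevalQuotientSpan ![ω, algebraMap DualNumbersZMod2 KleinModel ω] (by
    rintro _ (rfl | rfl | rfl) <;> simp <;> decide)

@[simp] theorem toModel_x : toModel x = ω := aevalQuotientSpan_mk_X _ _ 0

@[simp] theorem toModel_y : toModel y = algebraMap DualNumbersZMod2 KleinModel ω :=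
  aevalQuotientSpan_mk_X _ _ 1

theorem toModel_injective : Function.Injective toModel := by
  refine (injective_iff_map_eq_zero toModel).mpr fun z hz => ?_
  obtain ⟨a, b, c, d, rfl⟩ := exists_eq_linear_combination z
  simp only [map_add, map_mul, map_pow, AlgHom.commutes, toModel_x, toModel_y] at hz
  obtain ⟨rfl, rfl, rfl, rfl⟩ : a = 0 ∧ b = 0 ∧ c = 0 ∧ d = 0 := by
    revert a b c d; decide
  simp

instance : Nontrivial KleinBottleRing := toModel.toRingHom.domain_nontrivial

theorem isNilpotent_X : ∀ i, IsNilpotent (Ideal.Quotient.mk _ (X i) : KleinBottleRing) :=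
  Fin.forall_fin_two.mpr ⟨⟨3, x_pow_three⟩, ⟨2, y_sq⟩⟩

theorem socle_diff_zero_subset : socle KleinBottleRing \ {0} ⊆ {x ^ 2} := by
  rintro z ⟨hz, hz0⟩
  have hzx := hz x (isNilpotent_X 0).not_isUnit
  have hzy := hz y (isNilpotent_X 1).not_isUnit
  apply toModel_injective
  rw [map_pow, toModel_x]
  exact KleinModel.eq_omega_sq_of_mul_eq_zero _ (by simpa using congrArg toModel hzx)
    (by simpa using congrArg toModel hzy) ((map_ne_zero_iff _ toModel_injective).mpr hz0)

end KleinBottleRing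

namespace WedgeRing

noncomputable def x : WedgeRing := Ideal.Quotient.mk _ (X 0)
noncomputable def y : WedgeRing := Ideal.Quotient.mk _ (X 1)

theorem x_pow_three : x ^ 3 = 0 := by
  rw [x, ← map_pow, Ideal.Quotient.eq_zero_iff_mem]; exact Ideal.subset_span (by simp)

theorem y_sq : y ^ 2 = 0 := by
  rw [y, ← map_pow, Ideal.Quotient.eq_zero_iff_mem]; exact Ideal.subset_span (by simp)

theorem x_mul_y : x * y = 0 := by
  rw [x, y, ← map_mul, Ideal.Quotient.eq_zero_iff_mem]; exact Ideal.subset_span (by simp)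

theorem isNilpotent_X : ∀ i, IsNilpotent (Ideal.Quotient.mk _ (X i) : WedgeRing) :=
  Fin.forall_fin_two.mpr ⟨⟨3, x_pow_three⟩, ⟨2, y_sq⟩⟩

theorem y_mem_socle : y ∈ socle WedgeRing :=
  mem_socle_of_forall_mul_X_eq_zero isNilpotent_X <| Fin.forall_fin_two.mpr
    ⟨show y * x = 0 by linear_combination x_mul_y, show y * y = 0 by linear_combination y_sq⟩

theorem x_sq_mem_socle : x ^ 2 ∈ socle WedgeRing :=
  mem_socle_of_forall_mul_X_eq_zero isNilpotent_X <| Fin.forall_fin_two.mpr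
    ⟨show x ^ 2 * x = 0 by linear_combination x_pow_three,
      show x ^ 2 * y = 0 by linear_combination x * x_mul_y⟩

noncomputable def toModel : WedgeRing →ₐ[ZMod 2] KleinModel × DualNumbersZMod2 :=
  aevalQuotientSpan ![(ω, 0), (0, ω)] (by
    rintro _ (rfl | rfl | rfl) <;> simp <;> decide)

@[simp] theorem toModel_x : toModel x = (ω, 0) := aevalQuotientSpan_mk_X _ _ 0
@[simp] theorem toModel_y : toModel y = (0, ω) := aevalQuotientSpan_mk_X _ _ 1

theorem y_ne_zero : y ≠ 0 := fun h => absurd (congrArg toModel h) (by simp; decide)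
theorem x_sq_ne_zero : x ^ 2 ≠ 0 := fun h => absurd (congrArg toModel h) (by simp; decide)
theorem y_ne_x_sq : y ≠ x ^ 2 := fun h => absurd (congrArg toModel h) (by simp; decide)

theorem not_subsingleton_socle_diff_zero : ¬(socle WedgeRing \ {0}).Subsingleton := fun h =>
  y_ne_x_sq (h ⟨y_mem_socle, y_ne_zero⟩ ⟨x_sq_mem_socle, x_sq_ne_zero⟩)

end WedgeRing

/-- The rings `ℤ/2[X,Y]/(X³, Y², X² + XY)` and `ℤ/2[X,Y]/(X³, Y², XY)` are not
isomorphic. -/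
theorem stmt10 :
    IsEmpty ((MvPolynomial (Fin 2) (ZMod 2) ⧸ Ideal.span
        {(X 0 : MvPolynomial (Fin 2) (ZMod 2)) ^ 3, (X 1) ^ 2, (X 0) ^ 2 + X 0 * X 1}) ≃+*
      (MvPolynomial (Fin 2) (ZMod 2) ⧸ Ideal.span
        {(X 0 : MvPolynomial (Fin 2) (ZMod 2)) ^ 3, (X 1) ^ 2, X 0 * X 1})) :=
  ⟨fun e => WedgeRing.not_subsingleton_socle_diff_zero <| e.symm.subsingleton_socle_diff_zero <|
    Set.subsingleton_singleton.anti KleinBottleRing.socle_diff_zero_subset⟩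
end

section
/- In the ring ℤ/2[X,Y]/(X³, Y², X² + XY), the square of every element of the ideal generated by the images of X and Y lies in the subgroup spanned by the image of X², and the image of X has nonzero square while the image of Y has zero square. -/
open MvPolynomial

lemma aux_decomp (p : MvPolynomial (Fin 2) (ZMod 2)) :
    ∃ c : ZMod 2, ∃ q ∈ Ideal.span {(X 0 : MvPolynomial (Fin 2) (ZMod 2)), X 1},
      p = C c + q := by
  induction p using MvPolynomial.induction_on with
  | C a => exact ⟨a, 0, Ideal.zero_mem _, by simp⟩
  | add p q hp hq =>
    obtain ⟨c, q1, hq1, rfl⟩ := hp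
    obtain ⟨d, q2, hq2, rfl⟩ := hq
    exact ⟨c + d, q1 + q2, add_mem hq1 hq2, by rw [map_add]; ring⟩
  | mul_X p i hp =>
    exact ⟨0, p * X i, Ideal.mul_mem_left _ _ (Ideal.subset_span (by fin_cases i <;> simp)),
      by simp⟩

lemma aux_notmem :
    (X 0 : MvPolynomial (Fin 2) (ZMod 2)) ^ 2 ∉ Ideal.span
      {(X 0 : MvPolynomial (Fin 2) (ZMod 2)) ^ 3, (X 1) ^ 2, (X 0) ^ 2 + X 0 * X 1} := by
  intro h
  rw [Ideal.mem_span_insert] at h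
  obtain ⟨p, z, hz, hp⟩ := h
  rw [Ideal.mem_span_insert] at hz
  obtain ⟨q, w, hw, rfl⟩ := hz
  rw [Ideal.mem_span_singleton] at hw
  obtain ⟨r, rfl⟩ := hw
  have hXY : (X 0 : MvPolynomial (Fin 2) (ZMod 2)) * X 1
      = monomial (Finsupp.single 0 1 + Finsupp.single 1 1) 1 := by
    rw [X, X, monomial_mul, one_mul]
  rw [mul_comm (X 0 ^ 2 + X 0 * X 1) r] at hp
  have h1 : ¬ ((Finsupp.single 0 1 + Finsupp.single 1 1 : Fin 2 →₀ ℕ)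
      ≤ Finsupp.single 0 2) := by
    intro hle
    have := Finsupp.le_def.mp hle 1
    simp [Finsupp.single_apply] at this
  have h2 : (Finsupp.single 0 2 : Fin 2 →₀ ℕ)
      ≠ Finsupp.single 0 1 + Finsupp.single 1 1 := by
    intro he
    have := DFunLike.congr_fun he 1
    simp [Finsupp.single_apply] at this
  have e1 := congrArg (coeff (Finsupp.single 0 2)) hp
  have e2 := congrArg (coeff (Finsupp.single 0 1 + Finsupp.single 1 1)) hp
  simp only [coeff_add, mul_add, X_pow_eq_monomial, hXY, coeff_mul_monomial',
    coeff_monomial, Finsupp.single_le_iff, Finsupp.single_apply, Finsupp.add_apply] at e1 e2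
  norm_num at e1 e2
  rw [if_neg h1, if_neg h2] at *
  rw [← e2] at e1
  norm_num at e1

set_option maxHeartbeats 1000000 in
/-- In `ℤ/2[X,Y]/(X³, Y², X² + XY)`, the square of every element of the ideal generated
by the images of `X` and `Y` lies in the additive subgroup generated by the image of
`X²`; moreover the image of `X` has nonzero square while the image of `Y` has zero
square. -/
theorem stmt11 :
    let Q := MvPolynomial (Fin 2) (ZMod 2) ⧸ Ideal.span
      {(X 0 : MvPolynomial (Fin 2) (ZMod 2)) ^ 3, (X 1) ^ 2, (X 0) ^ 2 + X 0 * X 1}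
    let π : MvPolynomial (Fin 2) (ZMod 2) →+* Q := Ideal.Quotient.mk _
    (∀ a : Q, a ∈ Ideal.span {π (X 0), π (X 1)} →
        a ^ 2 ∈ AddSubgroup.closure {π ((X 0) ^ 2)}) ∧
      (π (X 0)) ^ 2 ≠ 0 ∧ (π (X 1)) ^ 2 = 0 := by
  intro Q π
  have hx3 : (π (X 0)) ^ 3 = 0 := by
    rw [← map_pow, Ideal.Quotient.eq_zero_iff_mem]
    exact Ideal.subset_span (by simp)
  have hy2 : (π (X 1)) ^ 2 = 0 := by
    rw [← map_pow, Ideal.Quotient.eq_zero_iff_mem]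
    exact Ideal.subset_span (by simp)
  have hxy : (π (X 0)) ^ 2 + π (X 0) * π (X 1) = 0 := by
    rw [← map_pow, ← map_mul, ← map_add, Ideal.Quotient.eq_zero_iff_mem]
    exact Ideal.subset_span (by simp)
  have hx2y : (π (X 0)) ^ 2 * π (X 1) = 0 := by
    have h : (π (X 0)) ^ 2 * π (X 1)
        = ((π (X 0)) ^ 2 + π (X 0) * π (X 1)) * π (X 1) - π (X 0) * (π (X 1)) ^ 2 := by ring
    rw [h, hxy, hy2]; ring
  refine ⟨?_, ?_, hy2⟩
  · intro a ha
    rw [Ideal.mem_span_pair] at ha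
    obtain ⟨u, v, hav⟩ := ha
    have hsq : a ^ 2 = (u ^ 2 - 2 * u * v) * (π (X 0)) ^ 2 := by
      have hyx : π (X 0) * π (X 1) = -(π (X 0)) ^ 2 :=
        eq_neg_of_add_eq_zero_right hxy
      have expand : a ^ 2 = u ^ 2 * (π (X 0)) ^ 2 + 2 * (u * v) * (π (X 0) * π (X 1))
          + v ^ 2 * (π (X 1)) ^ 2 := by rw [← hav]; ring
      rw [expand, hyx, hy2]; ring
    obtain ⟨pw, hpw⟩ := Ideal.Quotient.mk_surjective (u ^ 2 - 2 * u * v)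
    obtain ⟨c, q, hq, hdec⟩ := aux_decomp pw
    have hqx : π q * (π (X 0)) ^ 2 = 0 := by
      rw [Ideal.mem_span_pair] at hq
      obtain ⟨s, t, hst⟩ := hq
      have : π q = π s * π (X 0) + π t * π (X 1) := by
        rw [← map_mul, ← map_mul, ← map_add, hst]
      rw [this]
      have h3 : (π s * π (X 0) + π t * π (X 1)) * (π (X 0)) ^ 2
          = π s * (π (X 0)) ^ 3 + π t * ((π (X 0)) ^ 2 * π (X 1)) := by ring
      rw [h3, hx3, hx2y]; ring
    have hw : u ^ 2 - 2 * u * v = π (C c) + π q := by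
      rw [← map_add, ← hdec, hpw]
    rw [hsq, hw, add_mul, hqx, add_zero, map_pow]
    have hc : c = 0 ∨ c = 1 := by fin_cases c; exacts [Or.inl rfl, Or.inr rfl]
    rcases hc with rfl | rfl
    · have h0 : π (C (0 : ZMod 2)) = 0 := by rw [map_zero, map_zero]
      rw [h0, zero_mul]
      exact zero_mem _
    · have h1 : π (C (1 : ZMod 2)) = 1 := by rw [map_one, map_one]
      rw [h1, one_mul]
      exact AddSubgroup.subset_closure rfl
  · intro h
    rw [← map_pow, Ideal.Quotient.eq_zero_iff_mem] at h
    exact aux_notmem h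
end
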